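/- arXiv:1810.08436 — 3 statements merged into one kernel-verified Lean document; each statement's English description precedes it below -/
import Mathlib

section
/- For every natural number n ≥ 1, the number of labeled trees on n vertices is n^(n-2) (Cayley's formula). -/
/-!
Fix a root `r`. A tree on `V` is determined by its parent map `f : V → V`, which sends each
vertex to its neighbour on the path to `r` (and fixes `r`); conversely, any map fixing `r`
whose iterates carry every vertex to `r` is the parent map of the tree with edges `{v, f v}`.

Parent maps on a finite set `S ∋ r` correspond to words of length `|S| - 2` over `S` (Prüfer
codes): record the parent of the largest leaf, delete that leaf, and repeat until at most two
vertices remain. Decoding works because the vertices other than `r` that are missing from the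
code are exactly the leaves.
-/

open Finset Function SimpleGraph

variable {α : Type*}

/-- A tree on `S` rooted at `r`, recorded by its parent map `f`. The map is the identity
outside `S`, so that the tree determines it. -/
structure IsParentMap (S : Finset α) (r : α) (f : α → α) : Prop where
  mapsTo : Set.MapsTo f S S
  apply_root : f r = r
  exists_iterate_eq_root : ∀ v ∈ S, ∃ k, f^[k] v = r
  apply_of_notMem : ∀ v ∉ S, f v = v

namespace IsParentMap

variable {S : Finset α} {r : α} {f : α → α}

lemma eq_root_of_apply_apply_eq (hf : IsParentMap S r f) {v : α} (hv : v ∈ S)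
    (h : f (f v) = v) : v = r := by
  obtain ⟨k, hk⟩ := hf.exists_iterate_eq_root v hv
  rw [← IsPeriodicPt.iterate_mod_apply (n := 2) h] at hk
  rcases Nat.mod_two_eq_zero_or_one k with h0 | h1
  · rwa [h0] at hk
  · rw [h1, iterate_one] at hk
    rw [← h, hk, hf.apply_root]

lemma apply_ne_self (hf : IsParentMap S r f) {v : α} (hv : v ∈ S) (hvr : v ≠ r) : f v ≠ v :=
  fun h => hvr (hf.eq_root_of_apply_apply_eq hv (by rw [h, h]))

end IsParentMap

section

variable [DecidableEq α] {S : Finset α} {r : α} {f g : α → α}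

lemma iterate_update_of_forall_iterate_ne {v w : α} (b : α) (h : ∀ k, f^[k] w ≠ v) (k : ℕ) :
    (update f v b)^[k] w = f^[k] w := by
  induction k with
  | zero => rfl
  | succ k ih => rw [iterate_succ_apply', iterate_succ_apply', ih, update_of_ne (h k)]

lemma image_update_of_mem {v : α} (b : α) (hv : v ∈ S) :
    S.image (update g v b) = insert b ((S.erase v).image g) := by
  conv_lhs => rw [← insert_erase hv]
  rw [image_insert, update_self,
    image_congr fun w hw => update_of_ne (ne_of_mem_erase (mem_coe.1 hw)) _ _]

def leaves (S : Finset α) (r : α) (f : α → α) : Finset α :=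
  S \ insert r (S.image f)

namespace IsParentMap

lemma leaves_nonempty (hf : IsParentMap S r f) (hr : r ∈ S) {v : α} (hv : v ∈ S)
    (hvr : v ≠ r) : (leaves S r f).Nonempty := by
  by_contra hempty
  rw [not_nonempty_iff_eq_empty, leaves, sdiff_eq_empty_iff_subset] at hempty
  have himage : S.image f = S := by
    refine (image_subset_iff.2 fun w hw => hf.mapsTo hw).antisymm fun w hw => ?_
    rcases mem_insert.1 (hempty hw) with rfl | hw'
    · exact mem_image.2 ⟨w, hr, hf.apply_root⟩
    · exact hw'
  have hinj : Set.InjOn f S := injOn_of_card_image_eq (by rw [himage])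
  obtain ⟨k, hk⟩ := hf.exists_iterate_eq_root v hv
  refine hvr (hinj.iterate hf.mapsTo k hv hr ?_)
  rw [hk, iterate_fixed hf.apply_root]

lemma erase_leaf (hf : IsParentMap S r f) {v : α} (hv : v ∈ leaves S r f) :
    IsParentMap (S.erase v) r (update f v v) := by
  obtain ⟨hvS, hv⟩ := mem_sdiff.1 hv
  obtain ⟨hvr, hvf⟩ : v ≠ r ∧ v ∉ S.image f := by simpa using hv
  have hoff : ∀ w ∈ S.erase v, ∀ k, f^[k] w ≠ v := by
    rintro w hw (_ | k) rfl
    · exact (ne_of_mem_erase hw) rfl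
    · rw [iterate_succ_apply'] at hvf
      exact hvf (mem_image_of_mem f (hf.mapsTo.iterate k (mem_of_mem_erase hw)))
  refine ⟨fun w hw => ?_, ?_, fun w hw => ?_, fun w hw => ?_⟩
  · rw [update_of_ne (ne_of_mem_erase hw)]
    exact mem_erase.2 ⟨fun h => hvf (h ▸ mem_image_of_mem f (mem_of_mem_erase hw)),
      hf.mapsTo (mem_of_mem_erase hw)⟩
  · rw [update_of_ne hvr.symm, hf.apply_root]
  · obtain ⟨k, hk⟩ := hf.exists_iterate_eq_root w (mem_of_mem_erase hw)
    exact ⟨k, by rw [iterate_update_of_forall_iterate_ne _ (hoff w hw), hk]⟩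
  · rcases eq_or_ne w v with rfl | hwv
    · exact update_self _ _ _
    · rw [update_of_ne hwv]
      exact hf.apply_of_notMem w fun h => hw (mem_erase.2 ⟨hwv, h⟩)

lemma insert_leaf {v a : α} (hg : IsParentMap (S.erase v) r g) (hv : v ∈ S) (hvr : v ≠ r)
    (ha : a ∈ S.erase v) : IsParentMap S r (update g v a) := by
  have hoff : ∀ w ∈ S.erase v, ∀ k, g^[k] w ≠ v := fun w hw k h =>
    (ne_of_mem_erase (hg.mapsTo.iterate k hw)) h
  have reach : ∀ w ∈ S.erase v, ∃ k, (update g v a)^[k] w = r := fun w hw => by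
    obtain ⟨k, hk⟩ := hg.exists_iterate_eq_root w hw
    exact ⟨k, by rw [iterate_update_of_forall_iterate_ne _ (hoff w hw), hk]⟩
  refine ⟨fun w hw => ?_, ?_, fun w hw => ?_, fun w hw => ?_⟩
  · rcases eq_or_ne w v with rfl | hwv
    · rw [update_self]; exact mem_of_mem_erase ha
    · rw [update_of_ne hwv]; exact mem_of_mem_erase (hg.mapsTo (mem_erase.2 ⟨hwv, hw⟩))
  · rw [update_of_ne hvr.symm, hg.apply_root]
  · rcases eq_or_ne w v with rfl | hwv
    · obtain ⟨k, hk⟩ := reach a ha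
      exact ⟨k + 1, by rw [iterate_succ_apply, update_self, hk]⟩
    · exact reach w (mem_erase.2 ⟨hwv, hw⟩)
  · rw [update_of_ne (ne_of_mem_of_not_mem hv hw).symm]
    exact hg.apply_of_notMem w fun h => hw (mem_of_mem_erase h)

end IsParentMap

def starMap (S : Finset α) (r : α) (v : α) : α :=
  if v ∈ S then r else v

lemma isParentMap_starMap (hr : r ∈ S) : IsParentMap S r (starMap S r) where
  mapsTo v hv := by rw [starMap, if_pos (mem_coe.1 hv)]; exact hr
  apply_root := by simp [starMap, hr]
  exists_iterate_eq_root v hv := ⟨1, by simp [starMap, hv]⟩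
  apply_of_notMem v hv := by simp [starMap, hv]

lemma IsParentMap.eq_starMap (hf : IsParentMap S r f) (hr : r ∈ S) (hS : S.card ≤ 2) :
    f = starMap S r := by
  funext v
  by_cases hv : v ∈ S
  · rw [starMap, if_pos hv]
    rcases eq_or_ne v r with rfl | hvr
    · exact hf.apply_root
    · have hcard : (S.erase v).card ≤ 1 := by rw [card_erase_of_mem hv]; omega
      exact card_le_one.1 hcard _ (mem_erase.2 ⟨hf.apply_ne_self hv hvr, hf.mapsTo hv⟩) _
        (mem_erase.2 ⟨hvr.symm, hr⟩)
  · rw [starMap, if_neg hv, hf.apply_of_notMem v hv]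

lemma insert_image_starMap : insert r (S.image (starMap S r)) = {r} := by
  ext w
  simp only [mem_insert, mem_image, mem_singleton, starMap]
  constructor
  · rintro (rfl | ⟨v, hv, rfl⟩)
    · rfl
    · rw [if_pos hv]
  · exact Or.inl

/-- `S.card - 2` truncates: the tree on a single vertex has the empty code. -/
def IsPrueferCode (S : Finset α) (l : List α) : Prop :=
  l.length = S.card - 2 ∧ ∀ x ∈ l, x ∈ S

lemma IsPrueferCode.sdiff_nonempty {a : α} {l : List α} (hl : IsPrueferCode S (a :: l)) :
    (S \ insert r (a :: l).toFinset).Nonempty := by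
  obtain ⟨v, hv, hv'⟩ := exists_mem_notMem_of_card_lt_card (s := insert r (a :: l).toFinset)
    (t := S) (by
      have := (card_insert_le r _).trans (Nat.succ_le_succ (List.toFinset_card_le (a :: l)))
      have := hl.1
      simp only [List.length_cons] at *
      omega)
  exact ⟨v, mem_sdiff.2 ⟨hv, hv'⟩⟩

lemma IsPrueferCode.erase {a v : α} {l : List α} (hl : IsPrueferCode S (a :: l))
    (hv : v ∈ S) (hvl : v ∉ l) : IsPrueferCode (S.erase v) l := by
  refine ⟨?_, fun x hx =>
    mem_erase.2 ⟨fun h => hvl (h ▸ hx), hl.2 x (List.mem_cons_of_mem a hx)⟩⟩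
  have := hl.1
  rw [card_erase_of_mem hv, List.length_cons] at *
  omega

lemma mem_sdiff_insert_cons {v a : α} {l : List α} (hv : v ∈ S \ insert r (a :: l).toFinset) :
    v ∈ S ∧ v ≠ r ∧ v ≠ a ∧ v ∉ l := by
  simpa [not_or] using hv

lemma update_update_self_of_apply_eq {v : α} (a : α) (hg : g v = v) :
    update (update g v a) v v = g := by
  rw [update_idem, update_eq_self_iff.2 hg.symm]

end

section Pruefer

variable [LinearOrder α] {S : Finset α} {r : α}

/-- Decoding of Prüfer codes: the leaf deleted first is the largest vertex other than `r` that
does not occur in the code, and its parent is the first letter. The `else` branch is never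
reached on codes of length `S.card - 2`. -/
def prueferDecode (S : Finset α) (r : α) : List α → α → α
  | [] => starMap S r
  | a :: l =>
    if h : (S \ insert r (a :: l).toFinset).Nonempty then
      update (prueferDecode (S.erase ((S \ insert r (a :: l).toFinset).max' h)) r l)
        ((S \ insert r (a :: l).toFinset).max' h) a
    else id

lemma prueferDecode_cons {a : α} {l : List α} {T : Finset α}
    (hT : T = S \ insert r (a :: l).toFinset) (hne : T.Nonempty) :
    prueferDecode S r (a :: l) =
      update (prueferDecode (S.erase (T.max' hne)) r l) (T.max' hne) a := by
  subst hT
  rw [prueferDecode, dif_pos hne]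

theorem isParentMap_prueferDecode {l : List α} (hr : r ∈ S) (hl : IsPrueferCode S l) :
    IsParentMap S r (prueferDecode S r l) := by
  induction l generalizing S with
  | nil => exact isParentMap_starMap hr
  | cons a l ih =>
    have hne := hl.sdiff_nonempty (r := r)
    obtain ⟨hvS, hvr, hva, hvl⟩ := mem_sdiff_insert_cons (max'_mem _ hne)
    rw [prueferDecode_cons rfl hne]
    exact (ih (mem_erase.2 ⟨hvr.symm, hr⟩) (hl.erase hvS hvl)).insert_leaf hvS hvr
      (mem_erase.2 ⟨hva.symm, hl.2 a List.mem_cons_self⟩)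

theorem insert_image_prueferDecode {l : List α} (hl : IsPrueferCode S l) :
    insert r (S.image (prueferDecode S r l)) = insert r l.toFinset := by
  induction l generalizing S with
  | nil => simpa [prueferDecode] using insert_image_starMap
  | cons a l ih =>
    have hne := hl.sdiff_nonempty (r := r)
    obtain ⟨hvS, -, -, hvl⟩ := mem_sdiff_insert_cons (max'_mem _ hne)
    rw [prueferDecode_cons rfl hne, image_update_of_mem _ hvS, insert_comm,
      ih (hl.erase hvS hvl), List.toFinset_cons, insert_comm]

theorem prueferDecode_injective {l m : List α} (hr : r ∈ S) (hl : IsPrueferCode S l)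
    (hm : IsPrueferCode S m) (h : prueferDecode S r l = prueferDecode S r m) : l = m := by
  induction l generalizing S m with
  | nil => exact (List.eq_nil_of_length_eq_zero (hm.1.trans hl.1.symm)).symm
  | cons a l ih =>
    obtain _ | ⟨b, m⟩ := m
    · exact absurd (hl.1.trans hm.1.symm) (by simp)
    obtain ⟨T, hTa⟩ : ∃ T, T = S \ insert r (a :: l).toFinset := ⟨_, rfl⟩
    have hTb : T = S \ insert r (b :: m).toFinset := by
      rw [hTa, ← insert_image_prueferDecode hl, h, insert_image_prueferDecode hm]
    have hne : T.Nonempty := hTa ▸ hl.sdiff_nonempty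
    obtain ⟨v, hvT, hdec_a, hdec_b⟩ : ∃ v ∈ T,
        prueferDecode S r (a :: l) = update (prueferDecode (S.erase v) r l) v a ∧
        prueferDecode S r (b :: m) = update (prueferDecode (S.erase v) r m) v b :=
      ⟨_, max'_mem T hne, prueferDecode_cons hTa hne, prueferDecode_cons hTb hne⟩
    obtain ⟨hvS, hvr, -, hvl⟩ := mem_sdiff_insert_cons (hTa ▸ hvT)
    obtain ⟨-, -, -, hvm⟩ := mem_sdiff_insert_cons (hTb ▸ hvT)
    have hupd := hdec_a.symm.trans (h.trans hdec_b)
    obtain rfl : a = b := by simpa using congrFun hupd v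
    have hr' : r ∈ S.erase v := mem_erase.2 ⟨hvr.symm, hr⟩
    have hl' := hl.erase hvS hvl
    have hm' := hm.erase hvS hvm
    refine congrArg _ (ih hr' hl' hm' ?_)
    rw [← update_update_self_of_apply_eq a
        ((isParentMap_prueferDecode hr' hl').apply_of_notMem v (notMem_erase v S)), hupd,
      update_update_self_of_apply_eq a
        ((isParentMap_prueferDecode hr' hm').apply_of_notMem v (notMem_erase v S))]

theorem exists_prueferDecode_eq {f : α → α} (hr : r ∈ S) (hf : IsParentMap S r f) :
    ∃ l, IsPrueferCode S l ∧ prueferDecode S r l = f := by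
  induction S using Finset.strongInduction generalizing f with
  | H S ih =>
  by_cases hS : S.card ≤ 2
  · exact ⟨[], ⟨by simp; omega, by simp⟩, (hf.eq_starMap hr hS).symm⟩
  obtain ⟨w, hw, hwr⟩ := exists_mem_ne (by omega : 1 < S.card) r
  have hne := hf.leaves_nonempty hr hw hwr
  set v := (leaves S r f).max' hne
  have hv : v ∈ leaves S r f := max'_mem _ hne
  obtain ⟨hvS, hvr⟩ : v ∈ S ∧ v ≠ r := by
    simp only [leaves, mem_sdiff, mem_insert, not_or] at hv
    exact ⟨hv.1, hv.2.1⟩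
  obtain ⟨l, hl, hdec⟩ :=
    ih (S.erase v) (erase_ssubset hvS) (mem_erase.2 ⟨hvr.symm, hr⟩) (hf.erase_leaf hv)
  have hf_eq : update (update f v v) v (f v) = f := by rw [update_idem, update_eq_self]
  have hT : leaves S r f = S \ insert r (f v :: l).toFinset := by
    rw [leaves]
    congr 1
    conv_lhs => rw [← hf_eq]
    rw [image_update_of_mem _ hvS, insert_comm, ← hdec, insert_image_prueferDecode hl,
      List.toFinset_cons, insert_comm]
  refine ⟨f v :: l, ⟨?_, ?_⟩, ?_⟩
  · have := hl.1
    rw [card_erase_of_mem hvS] at this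
    simp only [List.length_cons]
    omega
  · intro x hx
    rcases List.mem_cons.1 hx with rfl | hx
    · exact hf.mapsTo hvS
    · exact mem_of_mem_erase (hl.2 x hx)
  · rw [prueferDecode_cons hT hne, hdec, hf_eq]

noncomputable def prueferEquiv (hr : r ∈ S) :
    {l // IsPrueferCode S l} ≃ {f // IsParentMap S r f} :=
  Equiv.ofBijective (fun l => ⟨prueferDecode S r l, isParentMap_prueferDecode hr l.2⟩)
    ⟨fun l m h => Subtype.ext (prueferDecode_injective hr l.2 m.2 (congrArg Subtype.val h)),
      fun f =>
        have ⟨l, hl, h⟩ := exists_prueferDecode_eq hr f.2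
        ⟨⟨l, hl⟩, Subtype.ext h⟩⟩

theorem card_isParentMap [Fintype α] (r : α) :
    Nat.card {f // IsParentMap univ r f} = Fintype.card α ^ (Fintype.card α - 2) := by
  have hcode : {l // IsPrueferCode (univ : Finset α) l} ≃ List.Vector α (Fintype.card α - 2) :=
    Equiv.subtypeEquivRight fun l => by simp [IsPrueferCode]
  rw [← Nat.card_congr (prueferEquiv (mem_univ r)), Nat.card_congr hcode,
    Nat.card_eq_fintype_card, card_vector]

end Pruefer

def parentGraph {V : Type*} (f : V → V) : SimpleGraph V :=
  fromRel fun v w => f v = w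

section ParentGraph

variable {V : Type*} {r : V} {f g : V → V}

lemma parentGraph_adj {v w : V} : (parentGraph f).Adj v w ↔ v ≠ w ∧ (f v = w ∨ f w = v) :=
  fromRel_adj _ _ _

variable [Fintype V]

namespace IsParentMap

lemma adj_apply (hf : IsParentMap univ r f) {v : V} (hvr : v ≠ r) :
    (parentGraph f).Adj v (f v) :=
  parentGraph_adj.2 ⟨(hf.apply_ne_self (mem_univ v) hvr).symm, Or.inl rfl⟩

lemma reachable (hf : IsParentMap univ r f) (v : V) : (parentGraph f).Reachable v r := by
  obtain ⟨k, hk⟩ := hf.exists_iterate_eq_root v (mem_univ v)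
  induction k generalizing v with
  | zero => exact hk ▸ Reachable.refl v
  | succ k ih =>
    rcases eq_or_ne v r with rfl | hvr
    · exact Reachable.refl v
    · exact (hf.adj_apply hvr).reachable.trans (ih (f v) hk)

lemma card_edgeSet (hf : IsParentMap univ r f) :
    Nat.card (parentGraph f).edgeSet + 1 = Nat.card V := by
  classical
  let e : {v // v ≠ r} → (parentGraph f).edgeSet := fun v => ⟨s(v, f v), hf.adj_apply v.2⟩
  have he : Bijective e := by
    refine ⟨fun ⟨v, hvr⟩ ⟨w, hwr⟩ h => Subtype.ext ?_, fun ⟨x, hx⟩ => ?_⟩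
    · rcases Sym2.eq_iff.1 (congrArg Subtype.val h) with ⟨hvw, -⟩ | ⟨hvw, hfv⟩
      · exact hvw
      · exact absurd (hf.eq_root_of_apply_apply_eq (mem_univ v)
          (by simp only at hvw hfv; rw [hfv, ← hvw])) hvr
    · induction x using Sym2.ind with
      | _ v w =>
      obtain ⟨hvw, rfl | rfl⟩ := parentGraph_adj.1 ((mem_edgeSet _).1 hx)
      · refine ⟨⟨v, fun hvr => hvw ?_⟩, rfl⟩
        rw [hvr, hf.apply_root]
      · refine ⟨⟨w, fun hwr => hvw ?_⟩, Subtype.ext Sym2.eq_swap⟩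
        rw [hwr, hf.apply_root]
  rw [← Nat.card_congr (Equiv.ofBijective e he), Nat.card_eq_fintype_card,
    Nat.card_eq_fintype_card, Fintype.card_subtype_compl, Fintype.card_subtype_eq]
  have := Fintype.card_pos_iff.2 ⟨r⟩
  omega

lemma isTree (hf : IsParentMap univ r f) : (parentGraph f).IsTree :=
  isTree_iff_connected_and_card.2 ⟨(connected_iff _).2
    ⟨fun u v => (hf.reachable u).trans (hf.reachable v).symm, ⟨r⟩⟩, hf.card_edgeSet⟩

lemma eq_of_parentGraph_eq (hf : IsParentMap univ r f) (hg : IsParentMap univ r g)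
    (h : parentGraph f = parentGraph g) : f = g := by
  funext v
  obtain ⟨k, hk⟩ := hf.exists_iterate_eq_root v (mem_univ v)
  induction k generalizing v with
  | zero =>
    rw [iterate_zero_apply] at hk
    rw [hk, hf.apply_root, hg.apply_root]
  | succ k ih =>
    rcases eq_or_ne v r with rfl | hvr
    · rw [hf.apply_root, hg.apply_root]
    have hadj : (parentGraph g).Adj v (f v) := h ▸ hf.adj_apply hvr
    rcases (parentGraph_adj.1 hadj).2 with hgv | hgfv
    · exact hgv.symm
    · exact absurd (hf.eq_root_of_apply_apply_eq (mem_univ v) ((ih (f v) hk).trans hgfv)) hvr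

end IsParentMap

end ParentGraph

namespace SimpleGraph.IsTree

variable {V : Type*} {G : SimpleGraph V} (hG : G.IsTree) {r : V}

noncomputable def pathTo (v r : V) : G.Path v r :=
  ⟨_, (hG.existsUnique_path v r).exists.choose_spec⟩

include hG in
lemma eq_pathTo {v : V} (p : G.Path v r) : p = hG.pathTo v r :=
  (hG.isAcyclic.subsingleton_path v r).elim _ _

noncomputable def parentMap (r v : V) : V :=
  (hG.pathTo v r).1.snd

lemma parentMap_root : hG.parentMap r r = r := by
  rw [parentMap, ← hG.eq_pathTo Path.nil]
  rfl

lemma adj_parentMap {v : V} (hvr : v ≠ r) : G.Adj v (hG.parentMap r v) :=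
  Walk.adj_snd (Walk.not_nil_of_ne hvr)

lemma length_pathTo_parentMap {v : V} (hvr : v ≠ r) :
    (hG.pathTo (hG.parentMap r v) r).1.length + 1 = (hG.pathTo v r).1.length := by
  rw [parentMap, ← hG.eq_pathTo ⟨_, (hG.pathTo v r).2.tail⟩]
  exact Walk.length_tail_add_one (Walk.not_nil_of_ne hvr)

lemma parentMap_eq_or_eq_of_adj {v w : V} (hadj : G.Adj v w) :
    hG.parentMap r v = w ∨ hG.parentMap r w = v := by
  by_cases hv : v ∈ (hG.pathTo w r).1.support
  · exact Or.inr (hG.isAcyclic.eq_snd_of_adj_start (hG.pathTo w r).2 hadj.symm hv).symm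
  · left
    rw [parentMap, ← hG.eq_pathTo ⟨_, (hG.pathTo w r).2.cons hv (h := hadj)⟩]
    exact Walk.snd_cons _ _

lemma iterate_parentMap_length_pathTo (v : V) :
    (hG.parentMap r)^[(hG.pathTo v r).1.length] v = r := by
  induction h : (hG.pathTo v r).1.length generalizing v with
  | zero => exact Walk.eq_of_length_eq_zero h
  | succ n ih =>
    have hvr : v ≠ r := by
      rintro rfl
      rw [← hG.eq_pathTo Path.nil] at h
      simp at h
    rw [iterate_succ_apply]
    exact ih _ (by have := hG.length_pathTo_parentMap hvr; omega)

lemma isParentMap_parentMap [Fintype V] : IsParentMap univ r (hG.parentMap r) :=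
  ⟨fun _ _ => mem_coe.2 (mem_univ _), hG.parentMap_root,
    fun v _ => ⟨_, hG.iterate_parentMap_length_pathTo v⟩, fun v hv => absurd (mem_univ v) hv⟩

lemma parentGraph_parentMap : parentGraph (hG.parentMap r) = G := by
  ext v w
  rw [parentGraph_adj]
  constructor
  · rintro ⟨hne, rfl | rfl⟩
    · exact hG.adj_parentMap fun hvr => hne (by rw [hvr, hG.parentMap_root])
    · exact (hG.adj_parentMap fun hwr => hne (by rw [hwr, hG.parentMap_root])).symm
  · exact fun hadj => ⟨hadj.ne, hG.parentMap_eq_or_eq_of_adj hadj⟩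

end SimpleGraph.IsTree

section Trees

variable {V : Type*} [Fintype V]

noncomputable def parentMapEquivTree (r : V) :
    {f // IsParentMap univ r f} ≃ {G : SimpleGraph V // G.IsTree} :=
  Equiv.ofBijective (fun f => ⟨parentGraph f.1, f.2.isTree⟩)
    ⟨fun f g h => Subtype.ext (f.2.eq_of_parentGraph_eq g.2 (congrArg Subtype.val h)),
      fun G =>
        ⟨⟨_, G.2.isParentMap_parentMap (r := r)⟩, Subtype.ext G.2.parentGraph_parentMap⟩⟩

theorem card_isTree [LinearOrder V] [Nonempty V] :
    Nat.card {G : SimpleGraph V // G.IsTree} = Fintype.card V ^ (Fintype.card V - 2) := by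
  rw [← Nat.card_congr (parentMapEquivTree (Classical.arbitrary V)), card_isParentMap]

end Trees

/-- Cayley's formula: the number of labeled trees on `n ≥ 1` vertices is `n^(n-2)`. -/
theorem cayley_formula (n : ℕ) (hn : 1 ≤ n) :
    Nat.card {G : SimpleGraph (Fin n) // G.IsTree} = n ^ (n - 2) := by
  have : Nonempty (Fin n) := ⟨⟨0, hn⟩⟩
  simpa using card_isTree (V := Fin n)
end

section
/- For any tree τ' on {1, ..., n+1}, deleting vertex n+1 and its incident edges, and then adding edges connecting the former neighbors of n+1 in increasing order into a path, yields a tree on {1, ..., n}. -/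
/-! Connectivity survives because contracting the edge from `n+1` to one of its neighbors maps
every edge of `τ'` onto a pair that is joined along the new path. Acyclicity then follows by
counting: charging each new path edge `{vᵢ, vᵢ₊₁}` to the deleted edge `{vᵢ, n+1}` embeds the
edges of `pullGraph τ'` into the `n` edges of `τ'` minus `{vₖ, n+1}`, leaving a connected graph
on `n` vertices with at most `n - 1` edges. -/

/-- `pullGraph τ'` is the graph on `{1, ..., n}` obtained from `τ'` on `{1, ..., n+1}`
by deleting vertex `n+1` together with its incident edges and reconnecting the former
neighbors of `n+1` in increasing order into a path (i.e. joining each neighbor to the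
next larger neighbor). -/
def pullGraph {n : ℕ} (τ' : SimpleGraph (Fin (n + 1))) : SimpleGraph (Fin n) :=
  SimpleGraph.fromRel fun a b =>
    τ'.Adj a.castSucc b.castSucc ∨
    (a < b ∧ τ'.Adj a.castSucc (Fin.last n) ∧ τ'.Adj b.castSucc (Fin.last n) ∧
      ∀ c : Fin n, a < c → c < b → ¬ τ'.Adj c.castSucc (Fin.last n))

open SimpleGraph

theorem SimpleGraph.Reachable.map_of_forall_adj {V W : Type*} {G : SimpleGraph V}
    {H : SimpleGraph W} {f : V → W} (hf : ∀ ⦃a b⦄, G.Adj a b → H.Reachable (f a) (f b))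
    {a b : V} (h : G.Reachable a b) : H.Reachable (f a) (f b) := by
  rw [reachable_iff_reflTransGen] at h ⊢
  exact Relation.ReflTransGen.lift' f
    (fun a b hab => (reachable_iff_reflTransGen _ _).1 (hf hab)) _ _ h

theorem SimpleGraph.Connected.of_surjective_of_forall_adj {V W : Type*} {G : SimpleGraph V}
    {H : SimpleGraph W} {f : V → W} (hsurj : Function.Surjective f)
    (hf : ∀ ⦃a b⦄, G.Adj a b → H.Reachable (f a) (f b)) (hG : G.Connected) : H.Connected :=
  have := hG.nonempty.map f
  { preconnected := hsurj.forall₂.2 fun a b => (hG.preconnected a b).map_of_forall_adj hf }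

section pullGraph

variable {n : ℕ} {τ' : SimpleGraph (Fin (n + 1))}

def ConsecutiveLastNeighbors (τ' : SimpleGraph (Fin (n + 1))) (a b : Fin n) : Prop :=
  a < b ∧ τ'.Adj a.castSucc (Fin.last n) ∧ τ'.Adj b.castSucc (Fin.last n) ∧
    ∀ c : Fin n, a < c → c < b → ¬ τ'.Adj c.castSucc (Fin.last n)

theorem ConsecutiveLastNeighbors.right_unique {a b c : Fin n}
    (hb : ConsecutiveLastNeighbors τ' a b) (hc : ConsecutiveLastNeighbors τ' a c) : b = c := by
  rcases lt_trichotomy b c with h | h | h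
  · exact absurd hb.2.2.1 (hc.2.2.2 b hb.1 h)
  · exact h
  · exact absurd hc.2.2.1 (hb.2.2.2 c hc.1 h)

theorem pullGraph_adj_iff {a b : Fin n} :
    (pullGraph τ').Adj a b ↔
      τ'.Adj a.castSucc b.castSucc ∨ ConsecutiveLastNeighbors τ' (a ⊓ b) (a ⊔ b) := by
  rw [pullGraph, fromRel_adj]
  rcases lt_trichotomy a b with h | rfl | h
  · simp +contextual [h.le, h.ne, ConsecutiveLastNeighbors, not_lt_of_gt h, adj_comm]
  · simp [ConsecutiveLastNeighbors]
  · simp [h.le, h.ne', ConsecutiveLastNeighbors, not_lt_of_gt h, adj_comm]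

theorem pullGraph_adj_of_adj_castSucc {a b : Fin n} (h : τ'.Adj a.castSucc b.castSucc) :
    (pullGraph τ').Adj a b :=
  pullGraph_adj_iff.2 (Or.inl h)

theorem ConsecutiveLastNeighbors.pullGraph_adj {a b : Fin n}
    (h : ConsecutiveLastNeighbors τ' a b) : (pullGraph τ').Adj a b :=
  pullGraph_adj_iff.2 (Or.inr (by rwa [inf_eq_left.2 h.1.le, sup_eq_right.2 h.1.le]))

theorem pullGraph_reachable_of_adj_last {a b : Fin n} (ha : τ'.Adj a.castSucc (Fin.last n))
    (hb : τ'.Adj b.castSucc (Fin.last n)) : (pullGraph τ').Reachable a b := by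
  wlog hab : a ≤ b generalizing a b
  · exact (this hb ha (le_of_not_ge hab)).symm
  induction b using WellFoundedLT.induction with
  | _ b ih =>
  obtain rfl | hlt := hab.eq_or_lt
  · rfl
  -- the largest neighbor of `n+1` in `[a, b)` is joined to `b`
  obtain ⟨c, ⟨hac, hcb, hc⟩, hmax⟩ :=
    Set.exists_max_image {c | a ≤ c ∧ c < b ∧ τ'.Adj c.castSucc (Fin.last n)} id
      (Set.toFinite _) ⟨a, le_rfl, hlt, ha⟩
  have hcons : ConsecutiveLastNeighbors τ' c b :=
    ⟨hcb, hc, hb, fun d hcd hdb hd => (hmax d ⟨hac.trans hcd.le, hdb, hd⟩).not_gt hcd⟩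
  exact (ih c hcb hc hac).trans hcons.pullGraph_adj.reachable

theorem exists_adj_last (hn : 1 ≤ n) (hτ' : τ'.Connected) :
    ∃ v : Fin n, τ'.Adj v.castSucc (Fin.last n) := by
  have : Nontrivial (Fin (n + 1)) := Fin.nontrivial_iff_two_le.2 (by omega)
  obtain ⟨u, hu⟩ := hτ'.preconnected.exists_adj_of_nontrivial (Fin.last n)
  exact ⟨u.castPred hu.ne', by simpa using hu.symm⟩

theorem pullGraph_connected (hn : 1 ≤ n) (hτ' : τ'.Connected) : (pullGraph τ').Connected := by
  obtain ⟨v₀, hv₀⟩ := exists_adj_last hn hτ'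
  refine hτ'.of_surjective_of_forall_adj (f := Fin.lastCases v₀ id)
    (fun a => ⟨a.castSucc, by simp⟩) fun x y hxy => ?_
  induction x using Fin.lastCases <;> induction y using Fin.lastCases
  · exact absurd hxy τ'.irrefl
  · simpa using pullGraph_reachable_of_adj_last hv₀ hxy.symm
  · simpa using pullGraph_reachable_of_adj_last hxy hv₀
  · simpa using (pullGraph_adj_of_adj_castSucc hxy).reachable

theorem pullGraph_mem_edgeSet_iff {e : Sym2 (Fin n)} :
    e ∈ (pullGraph τ').edgeSet ↔
      e.map Fin.castSucc ∈ τ'.edgeSet ∨ ConsecutiveLastNeighbors τ' e.inf e.sup := by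
  induction e using Sym2.ind
  simpa using pullGraph_adj_iff

theorem last_notMem_map_castSucc (e : Sym2 (Fin n)) : Fin.last n ∉ e.map Fin.castSucc := by
  simp [Sym2.mem_map, Fin.castSucc_ne_last]

open Classical in
noncomputable def chargedEdge (τ' : SimpleGraph (Fin (n + 1))) (e : Sym2 (Fin n)) :
    Sym2 (Fin (n + 1)) :=
  if e.map Fin.castSucc ∈ τ'.edgeSet then e.map Fin.castSucc else s(e.inf.castSucc, Fin.last n)

theorem chargedEdge_mapsTo {M : Fin n} (hmax : ∀ b, τ'.Adj b.castSucc (Fin.last n) → b ≤ M) :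
    Set.MapsTo (chargedEdge τ') (pullGraph τ').edgeSet
      (τ'.edgeSet \ {s(M.castSucc, Fin.last n)}) := by
  intro e he
  unfold chargedEdge
  split_ifs with hold
  · refine ⟨hold, fun hM => last_notMem_map_castSucc e ?_⟩
    rw [Set.mem_singleton_iff.1 hM]
    exact Sym2.mem_mk_right _ _
  · have hcons := (pullGraph_mem_edgeSet_iff.1 he).resolve_left hold
    refine ⟨hcons.2.1, fun hM => ?_⟩
    have hinf : e.inf = M := by simpa [Fin.castSucc_ne_last] using hM
    exact (hcons.1.trans_le (hmax _ hcons.2.2.1)).ne hinf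

theorem chargedEdge_injOn : Set.InjOn (chargedEdge τ') (pullGraph τ').edgeSet := by
  intro e he f hf hef
  unfold chargedEdge at hef
  split_ifs at hef with hold hold' hold'
  · exact Sym2.map.injective (Fin.castSucc_injective n) hef
  · exact absurd (hef ▸ Sym2.mem_mk_right _ _) (last_notMem_map_castSucc e)
  · exact absurd (hef ▸ Sym2.mem_mk_right _ _) (last_notMem_map_castSucc f)
  · have hinf : e.inf = f.inf := by simpa [Fin.castSucc_ne_last] using hef
    have hce := (pullGraph_mem_edgeSet_iff.1 he).resolve_left hold
    have hcf := (pullGraph_mem_edgeSet_iff.1 hf).resolve_left hold'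
    rw [hinf] at hce
    exact Sym2.inf_eq_inf_and_sup_eq_sup.1 ⟨hinf, hce.right_unique hcf⟩

theorem pullGraph_card_edgeSet_add_one_le (hn : 1 ≤ n) (hτ' : τ'.IsTree) :
    Nat.card (pullGraph τ').edgeSet + 1 ≤ n := by
  obtain ⟨v₀, hv₀⟩ := exists_adj_last hn hτ'.connected
  obtain ⟨M, hM, hmax⟩ := Set.exists_max_image {b : Fin n | τ'.Adj b.castSucc (Fin.last n)} id
    (Set.toFinite _) ⟨v₀, hv₀⟩
  have hτ'card : τ'.edgeSet.ncard = n := by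
    simpa using (isTree_iff_connected_and_card.1 hτ').2
  have hle := Set.ncard_le_ncard_of_injOn _ (chargedEdge_mapsTo (M := M) hmax) chargedEdge_injOn
    (Set.toFinite _)
  rw [Set.ncard_sdiff_singleton_of_mem (show s(M.castSucc, Fin.last n) ∈ τ'.edgeSet from hM),
    hτ'card] at hle
  rw [Nat.card_coe_set_eq]
  omega

end pullGraph

/-- Deleting the vertex `n+1` from a tree on `{1, ..., n+1}` and reconnecting its
former neighbors in increasing order into a path yields a tree on `{1, ..., n}`. -/
theorem pullGraph_isTree (n : ℕ) (hn : 1 ≤ n) (τ' : SimpleGraph (Fin (n + 1)))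
    (hτ' : τ'.IsTree) : (pullGraph τ').IsTree := by
  have hconn := pullGraph_connected hn hτ'.connected
  refine isTree_iff_connected_and_card.2 ⟨hconn, le_antisymm ?_ ?_⟩
  · simpa using pullGraph_card_edgeSet_add_one_le hn hτ'
  · simpa using hconn.card_vert_le_card_edgeSet_add_one
end

section
/- Let τ be a tree on {1,...,n} and let P = (v_1, ..., v_k) be a path in τ (k ≥ 1). The graph τ' on {1, ..., n+1} obtained from τ by deleting the k-1 edges of P and adding k edges from vertex n+1 to each of v_1, ..., v_k is a tree on n+1 vertices. -/
/-!
The new vertex `n+1` restores connectivity: an edge `w i — w (i+1)` of the path that was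
deleted is replaced by the detour `w i — (n+1) — w (i+1)`. Counting edges, `k` edges are removed
and `k + 1` are added, so `τ'` is a connected graph on `n + 1` vertices with `n` edges, hence a
tree.
-/

/-- Given a graph `τ` on `{1, ..., n}` and a path `w 0, ..., w k` in it, `pushGraph`
is the graph on `{1, ..., n+1}` obtained by deleting the `k` edges of the path and
connecting each of its vertices to the new vertex `n+1`. -/
def pushGraph {n k : ℕ} (τ : SimpleGraph (Fin n)) (w : Fin (k + 1) → Fin n) :
    SimpleGraph (Fin (n + 1)) :=
  SimpleGraph.fromRel fun a b =>
    (∃ a' b' : Fin n, a = a'.castSucc ∧ b = b'.castSucc ∧ τ.Adj a' b' ∧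
      ¬ ∃ i : Fin k, (w i.castSucc = a' ∧ w i.succ = b') ∨
        (w i.castSucc = b' ∧ w i.succ = a')) ∨
    (a = Fin.last n ∧ ∃ i : Fin (k + 1), b = (w i).castSucc)

open Function SimpleGraph

theorem SimpleGraph.Reachable.lift {V W : Type*} {G : SimpleGraph V} {H : SimpleGraph W}
    {f : V → W} (hf : ∀ a b, G.Adj a b → H.Reachable (f a) (f b)) {u v : V}
    (h : G.Reachable u v) : H.Reachable (f u) (f v) := by
  simp only [reachable_iff_reflTransGen] at h hf ⊢
  exact Relation.ReflTransGen.lift' f hf _ _ h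

section StepEdges

variable {V : Type*} {k : ℕ}

def stepEdges (w : Fin (k + 1) → V) : Set (Sym2 V) :=
  Set.range fun i : Fin k => s(w i.castSucc, w i.succ)

variable {w : Fin (k + 1) → V}

theorem mk_mem_stepEdges_iff {a b : V} : s(a, b) ∈ stepEdges w ↔
    ∃ i : Fin k, (w i.castSucc = a ∧ w i.succ = b) ∨ (w i.castSucc = b ∧ w i.succ = a) := by
  simp only [stepEdges, Set.mem_range, Sym2.eq_iff]

theorem ncard_stepEdges (hw : Injective w) : (stepEdges w).ncard = k := by
  rw [stepEdges, Set.ncard_range_of_injective, Nat.card_fin]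
  intro i j hij
  rcases Sym2.eq_iff.mp hij with ⟨h, -⟩ | ⟨h₁, h₂⟩
  · exact Fin.castSucc_injective _ (hw h)
  · -- a crosswise match would give `i = j + 1` and `j = i + 1`
    have h₁ := congrArg Fin.val (hw h₁)
    have h₂ := congrArg Fin.val (hw h₂)
    simp only [Fin.val_castSucc, Fin.val_succ] at h₁ h₂
    omega

theorem stepEdges_subset_edgeSet {G : SimpleGraph V}
    (hadj : ∀ i : Fin k, G.Adj (w i.castSucc) (w i.succ)) : stepEdges w ⊆ G.edgeSet := by
  rintro _ ⟨i, rfl⟩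
  exact hadj i

end StepEdges

section PushGraph

variable {n k : ℕ} {τ : SimpleGraph (Fin n)} {w : Fin (k + 1) → Fin n}

theorem pushGraph_adj_castSucc {a b : Fin n} :
    (pushGraph τ w).Adj a.castSucc b.castSucc ↔ τ.Adj a b ∧ s(a, b) ∉ stepEdges w := by
  simp only [pushGraph, fromRel_adj, Fin.castSucc_inj, mk_mem_stepEdges_iff]
  grind [τ.ne_of_adj, τ.adj_symm, Fin.castSucc_ne_last]

theorem pushGraph_adj_last {a : Fin n} :
    (pushGraph τ w).Adj (Fin.last n) a.castSucc ↔ ∃ i, w i = a := by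
  simp [pushGraph, (Fin.castSucc_ne_last _).symm, eq_comm]

theorem pushGraph_eq_sup :
    pushGraph τ w = (τ.deleteEdges (stepEdges w)).map Fin.castSuccEmb ⊔
      fromEdgeSet (Set.range fun i => s(Fin.last n, (w i).castSucc)) := by
  have adj_last (a : Fin n) : (pushGraph τ w).Adj (Fin.last n) a.castSucc ↔
      ((τ.deleteEdges (stepEdges w)).map Fin.castSuccEmb ⊔
        fromEdgeSet (Set.range fun i => s(Fin.last n, (w i).castSucc))).Adj
        (Fin.last n) a.castSucc := by
    simp only [sup_adj, map_adj]
    simp [pushGraph_adj_last, (Fin.castSucc_ne_last _).symm]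
  ext a b
  induction a using Fin.lastCases <;> induction b using Fin.lastCases
  · simp
  · exact adj_last _
  · rw [adj_comm, adj_last, adj_comm]
  · simp only [sup_adj, ← Fin.coe_castSuccEmb, map_adj_apply]
    simp [pushGraph_adj_castSucc, (Fin.castSucc_ne_last _).symm]

theorem ncard_edgeSet_pushGraph (hw : Injective w)
    (hadj : ∀ i : Fin k, τ.Adj (w i.castSucc) (w i.succ)) :
    (pushGraph τ w).edgeSet.ncard = τ.edgeSet.ncard + 1 := by
  set star := Set.range fun i => s(Fin.last n, (w i).castSucc)
  have star_sdiff_diagSet : star \ Sym2.diagSet = star := by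
    refine sdiff_eq_left.mpr (Set.disjoint_left.mpr ?_)
    rintro _ ⟨i, rfl⟩
    simpa using (Fin.castSucc_ne_last _).symm
  have ncard_star : star.ncard = k + 1 := by
    rw [Set.ncard_range_of_injective, Nat.card_fin]
    exact fun i j h => hw (Fin.castSucc_injective _ (Sym2.congr_right.mp h))
  have disjoint_star : Disjoint (Fin.castSuccEmb.sym2Map '' (τ.edgeSet \ stepEdges w)) star := by
    refine Set.disjoint_left.mpr ?_
    rintro _ ⟨e, -, rfl⟩ ⟨i, hi⟩
    have : Fin.last n ∈ Fin.castSuccEmb.sym2Map e := hi ▸ Sym2.mem_mk_left _ _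
    obtain ⟨a, -, ha⟩ := Sym2.mem_map.mp this
    exact Fin.castSucc_ne_last a ha
  have hsub := stepEdges_subset_edgeSet hadj
  have hk : k ≤ τ.edgeSet.ncard := ncard_stepEdges hw ▸ Set.ncard_le_ncard hsub
  rw [pushGraph_eq_sup, edgeSet_sup, edgeSet_map, edgeSet_deleteEdges, edgeSet_fromEdgeSet,
    star_sdiff_diagSet, Set.ncard_union_eq disjoint_star,
    Set.ncard_image_of_injective _ (Embedding.injective _), Set.ncard_sdiff hsub,
    ncard_stepEdges hw, ncard_star]
  omega

theorem pushGraph_connected (hτ : τ.Connected) : (pushGraph τ w).Connected := by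
  have adj_hub (i : Fin (k + 1)) : (pushGraph τ w).Adj (Fin.last n) (w i).castSucc :=
    pushGraph_adj_last.mpr ⟨i, rfl⟩
  have reachable_of_adj (a b : Fin n) (h : τ.Adj a b) :
      (pushGraph τ w).Reachable a.castSucc b.castSucc := by
    by_cases hab : s(a, b) ∈ stepEdges w
    · obtain ⟨i, ⟨rfl, rfl⟩ | ⟨rfl, rfl⟩⟩ := mk_mem_stepEdges_iff.mp hab <;>
        exact (adj_hub _).symm.reachable.trans (adj_hub _).reachable
    · exact (pushGraph_adj_castSucc.mpr ⟨h, hab⟩).reachable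
  have reachable_last (x : Fin (n + 1)) : (pushGraph τ w).Reachable x (Fin.last n) := by
    induction x using Fin.lastCases with
    | last => rfl
    | cast a =>
      exact ((hτ.preconnected a (w 0)).lift reachable_of_adj).trans (adj_hub 0).symm.reachable
  exact ⟨fun x y => (reachable_last x).trans (reachable_last y).symm⟩

end PushGraph

/-- Replacing the edges of a path in a tree on `n` vertices with edges from each path
vertex to a new vertex `n+1` yields a tree on `n+1` vertices. -/
theorem pushGraph_isTree (n k : ℕ) (τ : SimpleGraph (Fin n)) (hτ : τ.IsTree)
    (w : Fin (k + 1) → Fin n) (hinj : Function.Injective w)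
    (hadj : ∀ i : Fin k, τ.Adj (w i.castSucc) (w i.succ)) :
    (pushGraph τ w).IsTree := by
  rw [isTree_iff_connected_and_card] at hτ ⊢
  refine ⟨pushGraph_connected hτ.1, ?_⟩
  simp only [Nat.card_coe_set_eq, ncard_edgeSet_pushGraph hinj hadj, Nat.card_fin] at hτ ⊢
  omega
end
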